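/- If k : I → ℝ is a smooth function on an open interval I ⊂ ℝ, then the function S(t,r) := S_{k(t)}(r) (the solution of the Jacobi problem with parameter k(t) evaluated at r) is smooth on I × ℝ, even at points where k changes sign. -/

import Mathlib

open FormalMultilinearSeries

/-- The solution of the Jacobi equation `f'' + k f = 0`, `f 0 = 0`, `f' 0 = 1`. -/
noncomputable def jacobiSol (k r : ℝ) : ℝ :=
  if 0 < k then Real.sin (Real.sqrt k * r) / Real.sqrt k
  else if k = 0 then r
  else Real.sinh (Real.sqrt (-k) * r) / Real.sqrt (-k)

/-- Coefficients of the entire function `φ` with `jacobiSol k r = r * φ (k * r ^ 2)`. -/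
noncomputable def jacobiCoeff (n : ℕ) : ℝ := (-1) ^ n / (Nat.factorial (2 * n + 1) : ℝ)

/-- The entire function `φ(x) = ∑ (-x)^n / (2n+1)!`. -/
noncomputable def jacobiPhi : ℝ → ℝ := ofScalarsSum jacobiCoeff

lemma jacobiCoeff_norm (n : ℕ) :
    ‖jacobiCoeff n‖ = 1 / (Nat.factorial (2 * n + 1) : ℝ) := by
  have h : (0:ℝ) < (Nat.factorial (2 * n + 1) : ℝ) := by positivity
  rw [jacobiCoeff, norm_div, norm_pow, norm_neg, norm_one, one_pow, Real.norm_eq_abs,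
    abs_of_pos h]

lemma jacobiSeries_radius : (ofScalars ℝ jacobiCoeff).radius = ⊤ := by
  apply ofScalars_radius_eq_top_of_tendsto
  · refine Filter.Eventually.of_forall fun n => ?_
    rw [jacobiCoeff]
    apply div_ne_zero
    · exact pow_ne_zero _ (by norm_num)
    · positivity
  · have key : ∀ n : ℕ, ‖jacobiCoeff n.succ‖ / ‖jacobiCoeff n‖
        = 1 / ((2 * (n:ℝ) + 2) * (2 * n + 3)) := by
      intro n
      have hidx : 2 * n.succ + 1 = (2 * n + 2) + 1 := by omega
      have hF : (Nat.factorial ((2 * n + 2) + 1) : ℝ)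
          = (Nat.factorial (2 * n + 1) : ℝ) * ((2 * (n:ℝ) + 2) * (2 * n + 3)) := by
        rw [Nat.factorial_succ, show 2 * n + 2 = (2 * n + 1) + 1 from by omega,
          Nat.factorial_succ]
        push_cast
        ring
      rw [jacobiCoeff_norm, jacobiCoeff_norm, hidx, hF]
      have hFn : (0:ℝ) < (Nat.factorial (2 * n + 1) : ℝ) := by positivity
      field_simp
    simp only [key]
    have hb : ∀ n : ℕ, 1 / ((2 * (n:ℝ) + 2) * (2 * n + 3)) ≤ 1 / ((n:ℝ) + 1) := by
      intro n
      apply one_div_le_one_div_of_le (by positivity)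
      nlinarith [Nat.cast_nonneg (α := ℝ) n]
    refine squeeze_zero (fun n => by positivity) hb ?_
    exact_mod_cast tendsto_one_div_add_atTop_nhds_zero_nat (𝕜 := ℝ)

lemma jacobiPhi_contDiff : ContDiff ℝ (⊤ : ℕ∞) jacobiPhi := by
  have hball : HasFPowerSeriesOnBall (ofScalars ℝ jacobiCoeff).sum (ofScalars ℝ jacobiCoeff)
      0 (ofScalars ℝ jacobiCoeff).radius :=
    (ofScalars ℝ jacobiCoeff).hasFPowerSeriesOnBall (jacobiSeries_radius ▸ ENNReal.zero_lt_top)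
  have h := hball.analyticOnNhd
  rw [contDiff_iff_contDiffAt]
  intro x
  refine (h x ?_).contDiffAt
  simp [jacobiSeries_radius]

lemma jacobiPhi_eq_tsum (y : ℝ) : jacobiPhi y = ∑' n, jacobiCoeff n • y ^ n :=
  ofScalars_sum_eq jacobiCoeff y

lemma jacobiPhi_zero : jacobiPhi 0 = 1 := by
  rw [jacobiPhi, ofScalarsSum_zero]
  simp [jacobiCoeff]

lemma jacobiPhi_pos {y : ℝ} (hy : 0 < y) :
    jacobiPhi y = Real.sin (Real.sqrt y) / Real.sqrt y := by
  set x := Real.sqrt y with hx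
  have hx0 : 0 < x := Real.sqrt_pos.2 hy
  have hsq : x ^ 2 = y := Real.sq_sqrt hy.le
  have h := (Real.hasSum_sin x).div_const x
  have key : ∀ n : ℕ, (-1:ℝ) ^ n * x ^ (2 * n + 1) / (Nat.factorial (2 * n + 1) : ℝ) / x
      = jacobiCoeff n • (x ^ 2) ^ n := by
    intro n
    have hpow : x ^ (2 * n + 1) = (x ^ 2) ^ n * x := by
      rw [← pow_mul, pow_succ]
    have hf : (Nat.factorial (2 * n + 1) : ℝ) ≠ 0 := by positivity
    rw [hpow, jacobiCoeff, smul_eq_mul]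
    field_simp
  simp only [key] at h
  rw [jacobiPhi_eq_tsum, ← hsq]
  exact h.tsum_eq

lemma jacobiPhi_neg {y : ℝ} (hy : y < 0) :
    jacobiPhi y = Real.sinh (Real.sqrt (-y)) / Real.sqrt (-y) := by
  set x := Real.sqrt (-y) with hx
  have hx0 : 0 < x := Real.sqrt_pos.2 (by linarith)
  have hsq : x ^ 2 = -y := Real.sq_sqrt (by linarith)
  have hy' : y = -(x ^ 2) := by rw [hsq]; ring
  have h := (Real.hasSum_sinh x).div_const x
  have key : ∀ n : ℕ, x ^ (2 * n + 1) / (Nat.factorial (2 * n + 1) : ℝ) / x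
      = jacobiCoeff n • (-(x ^ 2)) ^ n := by
    intro n
    have hpow : x ^ (2 * n + 1) = (x ^ 2) ^ n * x := by
      rw [← pow_mul, pow_succ]
    have hf : (Nat.factorial (2 * n + 1) : ℝ) ≠ 0 := by positivity
    rw [hpow, jacobiCoeff, smul_eq_mul]
    field_simp
    rw [neg_pow (x ^ 2) n, ← mul_assoc, ← pow_add, Even.neg_one_pow ⟨n, by ring⟩, one_mul]
  simp only [key] at h
  rw [jacobiPhi_eq_tsum, hy']
  exact h.tsum_eq

/-- The key identity: `jacobiSol k r = r * φ (k * r ^ 2)`. -/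
lemma jacobiSol_eq (k r : ℝ) : jacobiSol k r = r * jacobiPhi (k * r ^ 2) := by
  rcases lt_trichotomy k 0 with hk | hk | hk
  · rw [jacobiSol, if_neg (by linarith), if_neg hk.ne]
    have hsk : Real.sqrt (-k) ≠ 0 := Real.sqrt_ne_zero'.2 (by linarith)
    rcases lt_trichotomy r 0 with hr | hr | hr
    · have hkr : k * r ^ 2 < 0 := mul_neg_of_neg_of_pos hk (by nlinarith)
      rw [jacobiPhi_neg hkr]
      have hs : Real.sqrt (-(k * r ^ 2)) = Real.sqrt (-k) * (-r) := by
        rw [show -(k * r ^ 2) = (-k) * (-r) ^ 2 by ring, Real.sqrt_mul (by linarith),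
          Real.sqrt_sq (by linarith)]
      rw [hs, show Real.sqrt (-k) * -r = -(Real.sqrt (-k) * r) by ring, Real.sinh_neg]
      field_simp [hr.ne]
    · subst hr; simp [jacobiPhi_zero]
    · have hkr : k * r ^ 2 < 0 := mul_neg_of_neg_of_pos hk (by nlinarith)
      rw [jacobiPhi_neg hkr]
      have hs : Real.sqrt (-(k * r ^ 2)) = Real.sqrt (-k) * r := by
        rw [show -(k * r ^ 2) = (-k) * r ^ 2 by ring, Real.sqrt_mul (by linarith),
          Real.sqrt_sq hr.le]
      rw [hs]
      field_simp [hr.ne']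
  · subst hk
    rw [jacobiSol, if_neg (lt_irrefl 0), if_pos rfl, zero_mul, jacobiPhi_zero, mul_one]
  · rw [jacobiSol, if_pos hk]
    have hsk : Real.sqrt k ≠ 0 := Real.sqrt_ne_zero'.2 hk
    rcases lt_trichotomy r 0 with hr | hr | hr
    · have hkr : 0 < k * r ^ 2 := mul_pos hk (by nlinarith)
      rw [jacobiPhi_pos hkr]
      have hs : Real.sqrt (k * r ^ 2) = Real.sqrt k * (-r) := by
        rw [show k * r ^ 2 = k * (-r) ^ 2 by ring, Real.sqrt_mul hk.le,
          Real.sqrt_sq (by linarith)]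
      rw [hs, show Real.sqrt k * -r = -(Real.sqrt k * r) by ring, Real.sin_neg]
      field_simp [hr.ne]
    · subst hr; simp [jacobiPhi_zero]
    · have hkr : 0 < k * r ^ 2 := mul_pos hk (by nlinarith)
      rw [jacobiPhi_pos hkr]
      have hs : Real.sqrt (k * r ^ 2) = Real.sqrt k * r := by
        rw [Real.sqrt_mul hk.le, Real.sqrt_sq hr.le]
      rw [hs]
      field_simp [hr.ne']

/-- If `k : I → ℝ` is smooth on an open interval `I`, then `S(t,r) = S_{k(t)}(r)` is smooth
on `I × ℝ`, even at points where `k` changes sign. -/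
theorem jacobiSol_comp_contDiffOn (a b : ℝ) (k : ℝ → ℝ)
    (hk : ContDiffOn ℝ (⊤ : ℕ∞) k (Set.Ioo a b)) :
    ContDiffOn ℝ (⊤ : ℕ∞) (fun p : ℝ × ℝ => jacobiSol (k p.1) p.2)
      (Set.Ioo a b ×ˢ (Set.univ : Set ℝ)) := by
  have heq : ∀ p : ℝ × ℝ, jacobiSol (k p.1) p.2 = p.2 * jacobiPhi (k p.1 * p.2 ^ 2) :=
    fun p => jacobiSol_eq (k p.1) p.2
  refine ContDiffOn.congr ?_ (fun p _ => heq p)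
  have h1 : ContDiffOn ℝ (⊤ : ℕ∞) (fun p : ℝ × ℝ => k p.1)
      (Set.Ioo a b ×ˢ (Set.univ : Set ℝ)) :=
    hk.comp contDiff_fst.contDiffOn (fun p hp => (Set.mem_prod.1 hp).1)
  have h2 : ContDiffOn ℝ (⊤ : ℕ∞) (fun p : ℝ × ℝ => k p.1 * p.2 ^ 2)
      (Set.Ioo a b ×ˢ (Set.univ : Set ℝ)) :=
    h1.mul ((contDiff_snd.pow 2).contDiffOn)
  exact (contDiff_snd.contDiffOn).mul (jacobiPhi_contDiff.comp_contDiffOn h2)
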